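/- Define the cross-ratio R(Ω₀, Ω₁) = (Ω₀−Ω₁)(Ω₀−Ω̄₁)^{-1}(Ω̄₀−Ω̄₁)(Ω̄₀−Ω₁)^{-1} for Ω₀, Ω₁ ∈ ℍ_n. Then for any M ∈ Sp(n,ℝ), the matrices R(M·Ω₁, M·Ω₀) and R(Ω₁, Ω₀) have the same eigenvalues (they are similar matrices). -/

import Mathlib

open Matrix

/-- `J_n = (0 I_n; -I_n 0)`. -/
def Jmat (n : ℕ) : Matrix (Fin n ⊕ Fin n) (Fin n ⊕ Fin n) ℝ :=
  Matrix.fromBlocks 0 1 (-1) 0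

/-- `M ∈ Sp(n,ℝ)` iff `Mᵀ J_n M = J_n`. -/
def IsSymplectic {n : ℕ} (M : Matrix (Fin n ⊕ Fin n) (Fin n ⊕ Fin n) ℝ) : Prop :=
  Mᵀ * Jmat n * M = Jmat n

/-- `Ω` lies in the Siegel upper half plane `ℍ_n`: it is symmetric and `Im Ω > 0`. -/
def InSiegelUHS {n : ℕ} (Ω : Matrix (Fin n) (Fin n) ℂ) : Prop :=
  Ω.IsSymm ∧ (Ω.map Complex.im).PosDef

/-- The action `M·Ω = (AΩ+B)(CΩ+D)⁻¹`, where `M = (A B; C D)` in block form. -/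
noncomputable def spSMul {n : ℕ} (M : Matrix (Fin n ⊕ Fin n) (Fin n ⊕ Fin n) ℝ)
    (Ω : Matrix (Fin n) (Fin n) ℂ) : Matrix (Fin n) (Fin n) ℂ :=
  (M.toBlocks₁₁.map Complex.ofReal * Ω + M.toBlocks₁₂.map Complex.ofReal) *
    (M.toBlocks₂₁.map Complex.ofReal * Ω + M.toBlocks₂₂.map Complex.ofReal)⁻¹

/-- The cross-ratio `R(Ω₀,Ω₁) = (Ω₀−Ω₁)(Ω₀−Ω̄₁)⁻¹(Ω̄₀−Ω̄₁)(Ω̄₀−Ω₁)⁻¹`. -/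
noncomputable def crossRatio {n : ℕ} (Ω₀ Ω₁ : Matrix (Fin n) (Fin n) ℂ) :
    Matrix (Fin n) (Fin n) ℂ :=
  (Ω₀ - Ω₁) * (Ω₀ - Ω₁.map (starRingEnd ℂ))⁻¹ *
    (Ω₀.map (starRingEnd ℂ) - Ω₁.map (starRingEnd ℂ)) *
    (Ω₀.map (starRingEnd ℂ) - Ω₁)⁻¹


/-!
Write `M = (A B; C D)` and `j(M, Ω) = CΩ + D`. Invariance of the symplectic form under `M`,
evaluated on the columns `(Ω; 1)` and `(Ω'; 1)`, gives for symmetric `Ω'`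
`M·Ω - M·Ω' = j(M, Ω')⁻ᵀ (Ω - Ω') j(M, Ω)⁻¹`, and since `M` is real the action commutes with
entrywise conjugation. Substituting this into the four factors of `R(M·Ω₁, M·Ω₀)`, the inner
automorphy factors cancel in pairs, leaving `R(M·Ω₁, M·Ω₀) = P R(Ω₁, Ω₀) P⁻¹` with
`P = j(M, Ω₀)⁻ᵀ`. The factors `j(M, Ω)` are invertible because `Im Ω > 0`, and so are
`j(M, Ω̄)`, their conjugates.
-/

namespace Siegel

open SymplecticGroup

variable {m R S : Type*} [Fintype m] [DecidableEq m] [CommRing R] [CommRing S]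

def num (M : Matrix (m ⊕ m) (m ⊕ m) R) (Ω : Matrix m m R) : Matrix m m R :=
  M.toBlocks₁₁ * Ω + M.toBlocks₁₂

def denom (M : Matrix (m ⊕ m) (m ⊕ m) R) (Ω : Matrix m m R) : Matrix m m R :=
  M.toBlocks₂₁ * Ω + M.toBlocks₂₂

noncomputable def moebius (M : Matrix (m ⊕ m) (m ⊕ m) R) (Ω : Matrix m m R) : Matrix m m R :=
  num M Ω * (denom M Ω)⁻¹

lemma fromBlocks_transpose_mul_J_mul_fromBlocks (P Q P' Q' : Matrix m m R) :
    (fromBlocks P (0 : Matrix m m R) Q 0)ᵀ * J m R * fromBlocks P' (0 : Matrix m m R) Q' 0 =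
      fromBlocks (Qᵀ * P' - Pᵀ * Q') 0 0 0 := by
  simp [J, fromBlocks_transpose, fromBlocks_multiply, sub_eq_add_neg]

lemma mul_fromBlocks_eq_num_denom (M : Matrix (m ⊕ m) (m ⊕ m) R) (Ω : Matrix m m R) :
    M * fromBlocks Ω 0 1 0 = fromBlocks (num M Ω) 0 (denom M Ω) 0 := by
  conv_lhs => rw [← fromBlocks_toBlocks M]
  simp [fromBlocks_multiply, num, denom]

-- The square matrices `fromBlocks Ω 0 1 0` stand in for the columns `(Ω; 1)`.
lemma denom_transpose_mul_num_sub {M : Matrix (m ⊕ m) (m ⊕ m) R}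
    (hM : M ∈ symplecticGroup m R) (X Y : Matrix m m R) :
    (denom M X)ᵀ * num M Y - (num M X)ᵀ * denom M Y = Y - Xᵀ := by
  have h := congrArg (fun N => (fromBlocks X 0 1 0)ᵀ * N * fromBlocks Y 0 1 0)
    (mem_iff'.mp hM)
  simp only [← Matrix.mul_assoc, ← transpose_mul] at h
  rw [Matrix.mul_assoc, mul_fromBlocks_eq_num_denom, mul_fromBlocks_eq_num_denom,
    fromBlocks_transpose_mul_J_mul_fromBlocks, fromBlocks_transpose_mul_J_mul_fromBlocks] at h
  simpa using congrArg toBlocks₁₁ h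

lemma denom_transpose_mul_moebius {M : Matrix (m ⊕ m) (m ⊕ m) R}
    (hM : M ∈ symplecticGroup m R) {Ω : Matrix m m R} (hΩ : Ω.IsSymm)
    (hT : IsUnit (denom M Ω)) :
    (denom M Ω)ᵀ * moebius M Ω = (num M Ω)ᵀ := by
  have h := denom_transpose_mul_num_sub hM Ω Ω
  rw [hΩ.eq, sub_self, sub_eq_zero] at h
  rw [moebius, ← Matrix.mul_assoc, h,
    mul_nonsing_inv_cancel_right _ _ ((isUnit_iff_isUnit_det _).mp hT)]

lemma moebius_sub {M : Matrix (m ⊕ m) (m ⊕ m) R} (hM : M ∈ symplecticGroup m R)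
    {Ω Ω' : Matrix m m R} (hΩ' : Ω'.IsSymm) (hT : IsUnit (denom M Ω))
    (hT' : IsUnit (denom M Ω')) :
    moebius M Ω - moebius M Ω' = ((denom M Ω')ᵀ)⁻¹ * (Ω - Ω') * (denom M Ω)⁻¹ := by
  have hdet := (isUnit_iff_isUnit_det _).mp hT
  have hdet' : IsUnit (denom M Ω')ᵀ.det := by
    rwa [det_transpose, ← isUnit_iff_isUnit_det]
  have key : (denom M Ω')ᵀ * (moebius M Ω - moebius M Ω') * denom M Ω = Ω - Ω' := by
    rw [Matrix.mul_sub, denom_transpose_mul_moebius hM hΩ' hT', Matrix.sub_mul, moebius,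
      ← Matrix.mul_assoc, nonsing_inv_mul_cancel_right _ _ hdet, denom_transpose_mul_num_sub hM,
      hΩ'.eq]
  rw [← key, Matrix.mul_assoc (denom M Ω')ᵀ, nonsing_inv_mul_cancel_left _ _ hdet',
    mul_nonsing_inv_cancel_right _ _ hdet]

lemma num_map (f : R →+* S) (M : Matrix (m ⊕ m) (m ⊕ m) R) (Ω : Matrix m m R) :
    (num M Ω).map f = num (M.map f) (Ω.map f) := by
  change f.mapMatrix (_ * _ + _) = _
  rw [map_add, map_mul]
  rfl

lemma denom_map (f : R →+* S) (M : Matrix (m ⊕ m) (m ⊕ m) R) (Ω : Matrix m m R) :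
    (denom M Ω).map f = denom (M.map f) (Ω.map f) := by
  change f.mapMatrix (_ * _ + _) = _
  rw [map_add, map_mul]
  rfl

lemma moebius_map (f : R →+* S) (M : Matrix (m ⊕ m) (m ⊕ m) R) {Ω : Matrix m m R}
    (hT : IsUnit (denom M Ω)) :
    (moebius M Ω).map f = moebius (M.map f) (Ω.map f) := by
  have hinv : (denom M Ω)⁻¹.map f = ((denom M Ω).map f)⁻¹ := by
    refine (inv_eq_left_inv ?_).symm
    rw [← Matrix.map_mul, nonsing_inv_mul _ ((isUnit_iff_isUnit_det _).mp hT),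
      Matrix.map_one f f.map_zero f.map_one]
  rw [moebius, moebius, Matrix.map_mul, hinv, num_map, denom_map]

end Siegel

open scoped ComplexOrder MatrixOrder in
lemma Matrix.PosDef.map_ofReal {m : Type*} [Fintype m] [DecidableEq m] {Y : Matrix m m ℝ}
    (hY : Y.PosDef) : (Y.map Complex.ofReal).PosDef := by
  obtain ⟨B, hB⟩ := CStarAlgebra.nonneg_iff_eq_star_mul_self.mp hY.posSemidef.nonneg
  have hfac : Y.map Complex.ofReal = (B.map Complex.ofReal)ᴴ * B.map Complex.ofReal := by
    ext i j
    simp [hB, Matrix.mul_apply]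
  refine (hfac ▸ posSemidef_conjTranspose_mul_self _).posDef_iff_isUnit.mpr ?_
  exact hY.isUnit.map (Complex.ofRealHom.mapMatrix (m := m))

lemma Matrix.map_ofReal_map_conj {m n : Type*} (M : Matrix m n ℝ) :
    (M.map Complex.ofReal).map (starRingEnd ℂ) = M.map Complex.ofReal := by
  ext i j
  simp

namespace Siegel

open SymplecticGroup
open scoped ComplexOrder

variable {m : Type*} [Fintype m] [DecidableEq m]

lemma map_ofReal_mem_symplecticGroup {M : Matrix (m ⊕ m) (m ⊕ m) ℝ}
    (hM : M ∈ symplecticGroup m ℝ) : M.map Complex.ofReal ∈ symplecticGroup m ℂ :=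
  map_mem hM Complex.ofRealHom

lemma isUnit_denom_of_posDef_im {M : Matrix (m ⊕ m) (m ⊕ m) ℝ} (hM : M ∈ symplecticGroup m ℝ)
    {Ω : Matrix m m ℂ} (hΩ : Ω.IsSymm) (hIm : (Ω.map Complex.im).PosDef) :
    IsUnit (denom (M.map Complex.ofReal) Ω) := by
  have hsub : Ω - (Ω.map (starRingEnd ℂ))ᵀ =
      (2 * Complex.I) • (Ω.map Complex.im).map Complex.ofReal := by
    rw [(hΩ.map _).eq]
    ext i j
    simp only [Matrix.sub_apply, map_apply, Complex.sub_conj, Complex.ofReal_mul,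
      Complex.ofReal_ofNat, map_map, Matrix.smul_apply, Function.comp_apply, smul_eq_mul]
    ring
  have hpair := denom_transpose_mul_num_sub (map_ofReal_mem_symplecticGroup hM)
    (Ω.map (starRingEnd ℂ)) Ω
  set T := denom (M.map Complex.ofReal) Ω
  have hconj : (denom (M.map Complex.ofReal) (Ω.map (starRingEnd ℂ)))ᵀ = Tᴴ := by
    conv_lhs => rw [← map_ofReal_map_conj M, ← denom_map]
    rfl
  -- `Tᴴ N - N'ᵀ T = 2i Im Ω` with `N = num Ω`, `N' = num Ω̄`; a kernel vector of `T` kills the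
  -- left side as a Hermitian form.
  rw [hconj, hsub] at hpair
  rw [isUnit_iff_isUnit_det, isUnit_iff_ne_zero]
  intro hdet
  obtain ⟨v, hv, hTv⟩ := exists_mulVec_eq_zero_iff.mpr hdet
  have hTv' : star v ᵥ* Tᴴ = 0 := by
    rw [← star_mulVec, hTv, star_zero]
  have h0 := congrArg (fun A => star v ⬝ᵥ (A *ᵥ v)) hpair
  simp only [sub_mulVec, ← mulVec_mulVec, hTv, mulVec_zero, sub_zero] at h0
  rw [dotProduct_mulVec, hTv', zero_dotProduct, smul_mulVec, dotProduct_smul, smul_eq_mul] at h0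
  exact mul_ne_zero (by simp) (hIm.map_ofReal.dotProduct_mulVec_pos hv).ne' h0.symm

lemma isUnit_denom_map_conj {M : Matrix (m ⊕ m) (m ⊕ m) ℝ} {Ω : Matrix m m ℂ}
    (hT : IsUnit (denom (M.map Complex.ofReal) Ω)) :
    IsUnit (denom (M.map Complex.ofReal) (Ω.map (starRingEnd ℂ))) := by
  rw [← map_ofReal_map_conj M, ← denom_map]
  exact hT.map (starRingEnd ℂ).mapMatrix

lemma moebius_map_conj {M : Matrix (m ⊕ m) (m ⊕ m) ℝ} {Ω : Matrix m m ℂ}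
    (hT : IsUnit (denom (M.map Complex.ofReal) Ω)) :
    (moebius (M.map Complex.ofReal) Ω).map (starRingEnd ℂ) =
      moebius (M.map Complex.ofReal) (Ω.map (starRingEnd ℂ)) := by
  rw [moebius_map _ _ hT, map_ofReal_map_conj]

end Siegel

-- `Jmat n` is the negative of Mathlib's `J`, which does not change the symplectic group.
lemma IsSymplectic.mem_symplecticGroup {n : ℕ} {M : Matrix (Fin n ⊕ Fin n) (Fin n ⊕ Fin n) ℝ}
    (hM : IsSymplectic M) : M ∈ symplecticGroup (Fin n) ℝ := by
  have hJ : Jmat n = -J (Fin n) ℝ := by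
    rw [Jmat, J, fromBlocks_neg, neg_zero, neg_neg]
  rw [IsSymplectic, hJ, Matrix.mul_neg, Matrix.neg_mul, neg_inj] at hM
  exact SymplecticGroup.mem_iff'.mpr hM

lemma spSMul_eq_moebius {n : ℕ} (M : Matrix (Fin n ⊕ Fin n) (Fin n ⊕ Fin n) ℝ)
    (Ω : Matrix (Fin n) (Fin n) ℂ) : spSMul M Ω = Siegel.moebius (M.map Complex.ofReal) Ω :=
  rfl

-- `Matrix.mul_inv_rev` holds without invertibility, so the differences `Ω₁ - Ω̄₀`, `Ω̄₁ - Ω₀`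
-- need no hypothesis.
lemma crossRatio_eq_of_sub_eq {n : ℕ} {Ω₀ Ω₁ W₀ W₁ F F' G G' : Matrix (Fin n) (Fin n) ℂ}
    (hF' : IsUnit F') (hG : IsUnit G) (hG' : IsUnit G')
    (h₁ : W₁ - W₀ = F * (Ω₁ - Ω₀) * G)
    (h₂ : W₁ - W₀.map (starRingEnd ℂ) = F' * (Ω₁ - Ω₀.map (starRingEnd ℂ)) * G)
    (h₃ : W₁.map (starRingEnd ℂ) - W₀.map (starRingEnd ℂ) =
      F' * (Ω₁.map (starRingEnd ℂ) - Ω₀.map (starRingEnd ℂ)) * G')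
    (h₄ : W₁.map (starRingEnd ℂ) - W₀ = F * (Ω₁.map (starRingEnd ℂ) - Ω₀) * G') :
    crossRatio W₁ W₀ = F * crossRatio Ω₁ Ω₀ * F⁻¹ := by
  rw [isUnit_iff_isUnit_det] at hF' hG hG'
  rw [crossRatio, crossRatio, h₁, h₂, h₃, h₄]
  simp only [Matrix.mul_inv_rev, Matrix.mul_assoc]
  rw [mul_nonsing_inv_cancel_left _ _ hG, nonsing_inv_mul_cancel_left _ _ hF',
    mul_nonsing_inv_cancel_left _ _ hG']

open Siegel SymplecticGroup in
theorem crossRatio_similar {n : ℕ}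
    (M : Matrix (Fin n ⊕ Fin n) (Fin n ⊕ Fin n) ℝ) (hM : IsSymplectic M)
    (Ω₀ Ω₁ : Matrix (Fin n) (Fin n) ℂ) (hΩ₀ : InSiegelUHS Ω₀) (hΩ₁ : InSiegelUHS Ω₁) :
    ∃ P : Matrix (Fin n) (Fin n) ℂ, IsUnit P ∧
      crossRatio (spSMul M Ω₁) (spSMul M Ω₀) = P * crossRatio Ω₁ Ω₀ * P⁻¹ := by
  have hMc := map_ofReal_mem_symplecticGroup hM.mem_symplecticGroup
  have hT₀ := isUnit_denom_of_posDef_im hM.mem_symplecticGroup hΩ₀.1 hΩ₀.2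
  have hT₁ := isUnit_denom_of_posDef_im hM.mem_symplecticGroup hΩ₁.1 hΩ₁.2
  have hT₀' := isUnit_denom_map_conj hT₀
  have hT₁' := isUnit_denom_map_conj hT₁
  have hs₀' : (Ω₀.map (starRingEnd ℂ)).IsSymm := hΩ₀.1.map _
  rw [spSMul_eq_moebius, spSMul_eq_moebius]
  refine ⟨((denom (M.map Complex.ofReal) Ω₀)ᵀ)⁻¹,
    isUnit_nonsing_inv_iff.mpr ((isUnit_transpose _).mpr hT₀),
    crossRatio_eq_of_sub_eq (isUnit_nonsing_inv_iff.mpr ((isUnit_transpose _).mpr hT₀'))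
      (isUnit_nonsing_inv_iff.mpr hT₁) (isUnit_nonsing_inv_iff.mpr hT₁')
      (moebius_sub hMc hΩ₀.1 hT₁ hT₀) ?_ ?_ ?_⟩
  · rw [moebius_map_conj hT₀]
    exact moebius_sub hMc hs₀' hT₁ hT₀'
  · rw [moebius_map_conj hT₀, moebius_map_conj hT₁]
    exact moebius_sub hMc hs₀' hT₁' hT₀'
  · rw [moebius_map_conj hT₁]
    exact moebius_sub hMc hΩ₀.1 hT₁' hT₀
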